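/- Let (T, ·) be a semigroup equipped with a map β : T → L⁺T satisfying: (i) head(β(t)) = t for all t ∈ T; (ii) Δ(β(t)) = map β (β(t)) for all t ∈ T (i.e. β is an L⁺-coalgebra structure, where Δ sends a nonempty list to its list of nonempty suffixes); and (iii) for all x, y ∈ T, if β(y) = [y, y₁, …, y_n] then β(x·y) = [x·y, x·y₁, …, x·y_n, y, y₁, …, y_n]. Then T is empty. -/

import Mathlib

/-!
STATEMENT 19: Let `(T, ·)` be a semigroup with a map `β : T → L⁺T` such that
(i) `head (β t) = t`, (ii) `Δ (β t) = map β (β t)` (i.e. `β` is an `L⁺`-coalgebra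
structure, `Δ` being the list-of-nonempty-suffixes comultiplication), and
(iii) if `β y = [y, y₁, …, y_n]` then `β (x·y) = [x·y, x·y₁, …, x·y_n, y, y₁, …, y_n]`
(the `θ`-entwining condition).  Then `T` is empty.

Nonempty lists over `X` are modelled as pairs `(x, l) : X × List X` (head and tail).
-/

namespace Stmt19

/-- Nonempty lists over `X`, modelled as head-tail pairs. -/
abbrev NEL (X : Type*) : Type _ := X × List X

/-- Functorial action of `L⁺`. -/
def mapNE {X Y : Type*} (f : X → Y) (p : NEL X) : NEL Y :=
  (f p.1, p.2.map f)

/-- The nonempty suffixes of a list, as nonempty lists. -/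
def suff {X : Type*} : List X → List (NEL X)
  | [] => []
  | y :: t => (y, t) :: suff t

/-- The comultiplication `Δ : L⁺X → L⁺L⁺X` (list of nonempty suffixes). -/
def delta {X : Type*} (p : NEL X) : NEL (NEL X) :=
  (p, suff p.2)

/-!
Write `n t` for the length of the tail of `β t`. Entwining gives `n (x * y) = 2 * n y + 1`, while
coassociativity says that if `β t = [t, z, …]` then `β z` is the suffix of `β t` starting at `z`, so
`n z = n t - 1`. If `β y = [y, z, …]`, then `y * z` is the second entry of `β (y * y)`, and the two
descriptions of `β (y * z)` give `n (y * z) = 2 * n y - 1` and `n (y * z) = 2 * n y`. Hence every `β t`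
is a singleton, contradicting `n (t * t) = 1`.
-/

def IsCoassociative {X : Type*} (β : X → NEL X) : Prop :=
  ∀ t, delta (β t) = mapNE β (β t)

def IsEntwined {T : Type*} [Mul T] (β : T → NEL T) : Prop :=
  ∀ x y : T, β (x * y) = (x * y, ((β y).2.map (fun z => x * z)) ++ (y :: (β y).2))

theorem IsCoassociative.apply_eq_of_snd_eq_cons {X : Type*} {β : X → NEL X}
    (hβ : IsCoassociative β) {t z : X} {rest : List X} (h : (β t).2 = z :: rest) :
    β z = (z, rest) := by
  have hsuff := congrArg Prod.snd (hβ t)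
  simp only [delta, mapNE, h, suff, List.map_cons, List.cons.injEq] at hsuff
  exact hsuff.1.symm

section Entwined

variable {T : Type*} [Mul T] {β : T → NEL T}

theorem IsEntwined.length_snd_mul (hβ : IsEntwined β) (x y : T) :
    (β (x * y)).2.length = 2 * (β y).2.length + 1 := by
  rw [hβ]
  simp only [List.length_append, List.length_map, List.length_cons]
  ring

theorem IsEntwined.snd_eq_nil (hent : IsEntwined β) (hco : IsCoassociative β) (y : T) :
    (β y).2 = [] := by
  cases hy : (β y).2 with
  | nil => rfl
  | cons z rest =>
    have hz : β z = (z, rest) := hco.apply_eq_of_snd_eq_cons hy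
    have hyy : (β (y * y)).2 = y * z :: (rest.map (fun w => y * w) ++ y :: z :: rest) := by
      rw [hent, hy]
      rfl
    have hyz := congrArg (fun p => p.2.length) (hco.apply_eq_of_snd_eq_cons hyy)
    simp only [hent.length_snd_mul, hz, List.length_append, List.length_map,
      List.length_cons] at hyz
    omega

end Entwined

theorem entwined_semigroup_isEmpty_general
    (T : Type*) [Semigroup T] (β : T → NEL T)
    -- (ii) `Δ (β t) = map β (β t)`:
    (hcoassoc : ∀ t : T, delta (β t) = mapNE β (β t))
    -- (iii) the `θ`-entwining condition: if `β y = [y, y₁, …, y_n]` then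
    -- `β (x·y) = [x·y, x·y₁, …, x·y_n, y, y₁, …, y_n]`:
    (hentw : ∀ x y : T,
      β (x * y) = (x * y, ((β y).2.map (fun z => x * z)) ++ (y :: (β y).2))) :
    IsEmpty T := by
  refine ⟨fun t => ?_⟩
  have hlen := IsEntwined.length_snd_mul hentw t t
  simp only [IsEntwined.snd_eq_nil hentw hcoassoc, List.length_nil] at hlen
  omega

/-- A semigroup `T` with an `L⁺`-coalgebra structure `β` satisfying the
`θ`-entwining condition must be empty. -/
theorem entwined_semigroup_isEmpty
    (T : Type*) [Semigroup T] (β : T → NEL T)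
    -- (i) `head (β t) = t`:
    (hhead : ∀ t : T, (β t).1 = t)
    -- (ii) `Δ (β t) = map β (β t)`:
    (hcoassoc : ∀ t : T, delta (β t) = mapNE β (β t))
    -- (iii) the `θ`-entwining condition: if `β y = [y, y₁, …, y_n]` then
    -- `β (x·y) = [x·y, x·y₁, …, x·y_n, y, y₁, …, y_n]`:
    (hentw : ∀ x y : T,
      β (x * y) = (x * y, ((β y).2.map (fun z => x * z)) ++ (y :: (β y).2))) :
    IsEmpty T :=
  entwined_semigroup_isEmpty_general T β hcoassoc hentw

end Stmt19
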